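/- arXiv:2106.03024 — 4 statements merged into one kernel-verified Lean document; each statement's English description precedes it below -/
import Mathlib

section
/- Let q ∈ [1,∞], let Ĝ ∈ ℝ^{m×p}, Ẑ ∈ ℝ^m, λ ≥ 0, and let β⁰ ∈ ℝ^p with nonempty support S = {j : β⁰_j ≠ 0}. Suppose ‖Ẑ − Ĝβ⁰‖_∞ ≤ λ, and let β̂ be an ℓ1-norm minimizer over the feasible set {β : ‖Ẑ − Ĝβ‖_∞ ≤ λ}, i.e. β̂ is feasible and ‖β̂‖₁ ≤ ‖β‖₁ for all feasible β. If CIF_q(S, Ĝ) > 0, then ‖β̂ − β⁰‖_q ≤ 2 |S|^{1/q} λ / CIF_q(S, Ĝ). -/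
open scoped ENNReal

/-- The ℓq norm of a vector `u ∈ ℝ^p`, for `q ∈ [1, ∞]` (via the `PiLp` norm). -/
noncomputable def lqNorm (q : ℝ≥0∞) [Fact (1 ≤ q)] {p : ℕ} (u : Fin p → ℝ) : ℝ :=
  ‖(WithLp.equiv q (Fin p → ℝ)).symm u‖

/-- The cone invertibility factor
`CIF_q(J, M) := inf { |J|^{1/q} ‖Mu‖_∞ / ‖u‖_q : u ≠ 0, ‖u_{Jᶜ}‖₁ ≤ ‖u_J‖₁ }`,
with the convention `|J|^{1/∞} = 1`. -/
noncomputable def CIF (q : ℝ≥0∞) [Fact (1 ≤ q)] {m p : ℕ} (J : Finset (Fin p))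
    (M : Matrix (Fin m) (Fin p) ℝ) : ℝ :=
  sInf {r : ℝ | ∃ u : Fin p → ℝ, u ≠ 0 ∧ (∑ j ∈ Jᶜ, |u j|) ≤ (∑ j ∈ J, |u j|) ∧
    r = (J.card : ℝ) ^ (q⁻¹.toReal) * ‖M.mulVec u‖ / lqNorm q u}

/-!
`β⁰` is feasible, so `‖β̂‖₁ ≤ ‖β⁰‖₁`; since `β⁰` vanishes off `S`, this puts the
error `u = β̂ - β⁰` in the cone `‖u_{Sᶜ}‖₁ ≤ ‖u_S‖₁`. Both `β̂` and `β⁰` are feasible, so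
`‖Ĝu‖_∞ ≤ 2λ`, and the definition of the cone invertibility factor as an infimum over the cone
gives `CIF_q(S, Ĝ) ‖u‖_q ≤ |S|^{1/q} ‖Ĝu‖_∞ ≤ 2 |S|^{1/q} λ`.
-/

open Finset

theorem lqNorm_nonneg (q : ℝ≥0∞) [Fact (1 ≤ q)] {p : ℕ} (u : Fin p → ℝ) : 0 ≤ lqNorm q u :=
  norm_nonneg _

theorem lqNorm_pos (q : ℝ≥0∞) [Fact (1 ≤ q)] {p : ℕ} {u : Fin p → ℝ} (hu : u ≠ 0) :
    0 < lqNorm q u :=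
  norm_pos_iff.mpr fun h => hu (by simpa using congrArg (WithLp.equiv q (Fin p → ℝ)) h)

theorem CIF_mul_lqNorm_le (q : ℝ≥0∞) [Fact (1 ≤ q)] {m p : ℕ} {J : Finset (Fin p)}
    (M : Matrix (Fin m) (Fin p) ℝ) {u : Fin p → ℝ}
    (hcone : (∑ j ∈ Jᶜ, |u j|) ≤ ∑ j ∈ J, |u j|) :
    CIF q J M * lqNorm q u ≤ (J.card : ℝ) ^ (q⁻¹.toReal) * ‖M.mulVec u‖ := by
  by_cases hu : u = 0
  · simp [hu, lqNorm]
  have hbdd : BddBelow {r : ℝ | ∃ v : Fin p → ℝ, v ≠ 0 ∧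
      (∑ j ∈ Jᶜ, |v j|) ≤ (∑ j ∈ J, |v j|) ∧
      r = (J.card : ℝ) ^ (q⁻¹.toReal) * ‖M.mulVec v‖ / lqNorm q v} := by
    refine ⟨0, ?_⟩
    rintro r ⟨v, -, -, rfl⟩
    have := lqNorm_nonneg q v
    positivity
  rw [← le_div_iff₀ (lqNorm_pos q hu)]
  exact csInf_le hbdd ⟨u, hu, hcone, rfl⟩

theorem sum_compl_abs_sub_le_of_sum_abs_le {ι : Type*} [Fintype ι] [DecidableEq ι]
    {S : Finset ι} {x y : ι → ℝ} (hy : ∀ j ∉ S, y j = 0)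
    (hl1 : (∑ j, |x j|) ≤ ∑ j, |y j|) :
    (∑ j ∈ Sᶜ, |x j - y j|) ≤ ∑ j ∈ S, |x j - y j| := by
  have hoff : (∑ j ∈ Sᶜ, |x j - y j|) = ∑ j ∈ Sᶜ, |x j| :=
    sum_congr rfl fun j hj => by rw [hy j (mem_compl.mp hj), sub_zero]
  have hy_on : (∑ j, |y j|) = ∑ j ∈ S, |y j| :=
    (sum_subset (subset_univ S) fun j _ hj => by rw [hy j hj, abs_zero]).symm
  have htri : (∑ j ∈ S, |y j|) ≤ ∑ j ∈ S, (|x j| + |x j - y j|) :=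
    sum_le_sum fun j _ => by simpa using abs_sub (x j) (x j - y j)
  rw [← sum_add_sum_compl S, hy_on] at hl1
  rw [sum_add_distrib] at htri
  linarith

theorem lq_error_bound_CIF_general
    (q : ℝ≥0∞) [Fact (1 ≤ q)] (m p : ℕ)
    (Ghat : Matrix (Fin m) (Fin p) ℝ) (Zhat : Fin m → ℝ) (lam : ℝ)
    (β0 βhat : Fin p → ℝ) (S : Finset (Fin p))
    (hS : ∀ j, j ∈ S ↔ β0 j ≠ 0)
    (hfeas0 : ‖Zhat - Ghat.mulVec β0‖ ≤ lam)
    (hfeashat : ‖Zhat - Ghat.mulVec βhat‖ ≤ lam)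
    (hmin : ∀ β : Fin p → ℝ, ‖Zhat - Ghat.mulVec β‖ ≤ lam →
      (∑ j, |βhat j|) ≤ ∑ j, |β j|)
    (hCIF : 0 < CIF q S Ghat) :
    lqNorm q (βhat - β0) ≤ 2 * (S.card : ℝ) ^ (q⁻¹.toReal) * lam / CIF q S Ghat := by
  have hsupp : ∀ j ∉ S, β0 j = 0 := fun j hj => not_not.mp (mt (hS j).mpr hj)
  have hcone : (∑ j ∈ Sᶜ, |(βhat - β0) j|) ≤ ∑ j ∈ S, |(βhat - β0) j| :=
    sum_compl_abs_sub_le_of_sum_abs_le hsupp (hmin β0 hfeas0)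
  have hGu : ‖Ghat.mulVec (βhat - β0)‖ ≤ 2 * lam :=
    calc ‖Ghat.mulVec (βhat - β0)‖
        = ‖(Zhat - Ghat.mulVec β0) - (Zhat - Ghat.mulVec βhat)‖ := by
          rw [Matrix.mulVec_sub, sub_sub_sub_cancel_left]
      _ ≤ ‖Zhat - Ghat.mulVec β0‖ + ‖Zhat - Ghat.mulVec βhat‖ := norm_sub_le _ _
      _ ≤ 2 * lam := by linarith
  rw [le_div_iff₀ hCIF, mul_comm]
  calc CIF q S Ghat * lqNorm q (βhat - β0)
      ≤ (S.card : ℝ) ^ (q⁻¹.toReal) * ‖Ghat.mulVec (βhat - β0)‖ := CIF_mul_lqNorm_le q Ghat hcone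
    _ ≤ (S.card : ℝ) ^ (q⁻¹.toReal) * (2 * lam) := by gcongr
    _ = 2 * (S.card : ℝ) ^ (q⁻¹.toReal) * lam := by ring

/-- If `β⁰` is feasible (`‖Ẑ − Ĝβ⁰‖_∞ ≤ λ`), `β̂` is an ℓ1-norm minimizer
over the feasible set `{β : ‖Ẑ − Ĝβ‖_∞ ≤ λ}`, and `CIF_q(S, Ĝ) > 0` where `S` is the
(nonempty) support of `β⁰`, then `‖β̂ − β⁰‖_q ≤ 2 |S|^{1/q} λ / CIF_q(S, Ĝ)`. -/
theorem lq_error_bound_CIF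
    (q : ℝ≥0∞) [Fact (1 ≤ q)] (m p : ℕ)
    (Ghat : Matrix (Fin m) (Fin p) ℝ) (Zhat : Fin m → ℝ) (lam : ℝ) (hlam : 0 ≤ lam)
    (β0 βhat : Fin p → ℝ) (S : Finset (Fin p))
    (hS : ∀ j, j ∈ S ↔ β0 j ≠ 0) (hSne : S.Nonempty)
    (hfeas0 : ‖Zhat - Ghat.mulVec β0‖ ≤ lam)
    (hfeashat : ‖Zhat - Ghat.mulVec βhat‖ ≤ lam)
    (hmin : ∀ β : Fin p → ℝ, ‖Zhat - Ghat.mulVec β‖ ≤ lam →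
      (∑ j, |βhat j|) ≤ ∑ j, |β j|)
    (hCIF : 0 < CIF q S Ghat) :
    lqNorm q (βhat - β0) ≤ 2 * (S.card : ℝ) ^ (q⁻¹.toReal) * lam / CIF q S Ghat :=
  lq_error_bound_CIF_general q m p Ghat Zhat lam β0 βhat S hS hfeas0 hfeashat hmin hCIF
end

section
/- Let (Ω, ℱ, P) be a probability space and let X₁, …, X_p : Ω → ℝ be jointly independent random variables. Let g : ℝ^p → ℝ be measurable with g(X₁,…,X_p) square-integrable. Assume that for every measurable h : ℝ^p → ℝ with h(X₁,…,X_p) square-integrable and satisfying E[h(X) | σ(X_j, j ≠ i)] = 0 almost surely for every i ∈ {1,…,p}, one has E[h(X) g(X)] = 0. Then there exist measurable functions g_i : ℝ^{p−1} → ℝ, i = 1,…,p, with each g_i(X_{−i}) square-integrable, such that g(X₁,…,X_p) = Σ_{i=1}^p g_i(X_{−i}) almost surely, where X_{−i} denotes the vector (X_j)_{j ≠ i}. -/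
/-!
The law of `X` is the product measure `π = ⊗ νᵢ`. For `S ⊆ {1, …, p}` let
`E_S f (x) = ∫ f (x_S, y_{Sᶜ}) dπ(y)`, the conditional expectation of `f` given the coordinates
in `S`; Fubini gives `E_A E_B = E_{A ∩ B}`. Hence the top Hoeffding term
`h = ∑_S (-1)^{|Sᶜ|} E_S g` is annihilated by every `E_{-i}`, so `h(X)` is an admissible test
function and `∫ h g = 0`, while `∫ h E_S g = 0` for `S ≠ univ` because `E_S g` is a function of
`X_{-i}` for any `i ∉ S`. Expanding `h` gives `∫ h² = ∫ h g = 0`, so `g = g - h` a.e., and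
`g - h = -∑_{S ≠ univ} (-1)^{|Sᶜ|} E_S g` splits into functions of the `X_{-i}`.
-/

open MeasureTheory ProbabilityTheory Finset

section HoeffdingDecomposition

variable {ι : Type*} [DecidableEq ι] {α : ι → Type*} [∀ i, MeasurableSpace (α i)]

theorem measurable_piecewise_prod (S : Finset ι) :
    Measurable fun q : (∀ i, α i) × (∀ i, α i) => S.piecewise q.1 q.2 := by
  refine measurable_pi_lambda _ fun j => ?_
  by_cases hj : j ∈ S <;> simp only [Finset.piecewise, hj, if_true, if_false] <;> fun_prop

variable [Fintype ι]

theorem sum_neg_one_pow_card_compl_mul_erase {R : Type*} [CommRing R] (i : ι)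
    (u : Finset ι → R) : ∑ S : Finset ι, (-1) ^ Sᶜ.card * u (S.erase i) = 0 := by
  rw [← powerset_univ, ← insert_erase (mem_univ i), sum_powerset_insert (notMem_erase i _),
    ← sum_add_distrib]
  refine sum_eq_zero fun T hT => ?_
  have hiT : i ∉ T := fun h => notMem_erase i _ (mem_powerset.1 hT h)
  rw [erase_insert hiT, erase_eq_of_notMem hiT, compl_insert,
    ← card_erase_add_one (mem_compl.2 hiT)]
  ring

theorem sum_eq_add_sum_sum_div_card_compl (a : Finset ι → ℝ) :
    ∑ S, a S = a univ + ∑ i, ∑ S with i ∉ S, a S / Sᶜ.card := by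
  have hfiber (S : Finset ι) :
      ∑ i with i ∉ S, a S / Sᶜ.card = if S = univ then 0 else a S := by
    have hcompl : ({i | i ∉ S} : Finset ι) = Sᶜ := by ext; simp
    rw [sum_const, hcompl, nsmul_eq_mul]
    split_ifs with h
    · simp [h]
    · have : (Sᶜ.card : ℝ) ≠ 0 := by simpa using h
      field_simp
  have hswap : ∑ i, ∑ S with i ∉ S, a S / Sᶜ.card = ∑ S, ∑ i with i ∉ S, a S / Sᶜ.card := by
    simp only [sum_filter]
    exact sum_comm
  rw [hswap, sum_congr rfl fun S _ => hfiber S, sum_ite, sum_const_zero, zero_add, filter_ne',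
    add_sum_erase _ _ (mem_univ _)]

variable (ν : ∀ i, Measure (α i))

noncomputable def condAvg (S : Finset ι) (f : (∀ i, α i) → ℝ) (x : ∀ i, α i) : ℝ :=
  ∫ y, f (S.piecewise x y) ∂Measure.pi ν

theorem condAvg_eq_of_eqOn {S : Finset ι} (f : (∀ i, α i) → ℝ) {x x' : ∀ i, α i}
    (h : ∀ j ∈ S, x j = x' j) : condAvg ν S f x = condAvg ν S f x' := by
  have (y : ∀ i, α i) : S.piecewise x y = S.piecewise x' y :=
    funext fun j => by by_cases hj : j ∈ S <;> simp [hj, h j]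
  simp only [condAvg, this]

/-- The top-order term of the Hoeffding (ANOVA) decomposition of `g`. -/
noncomputable def topInteraction (g : (∀ i, α i) → ℝ) (x : ∀ i, α i) : ℝ :=
  ∑ S : Finset ι, (-1) ^ Sᶜ.card * condAvg ν S g x

/-- The term of `g - topInteraction ν g` indexed by `S ≠ univ` is shared equally among the
`|Sᶜ|` coordinates outside `S`. -/
noncomputable def additiveComponent (g : (∀ i, α i) → ℝ) (i : ι) (x : ∀ i, α i) : ℝ :=
  -∑ S with i ∉ S, (-1) ^ Sᶜ.card / Sᶜ.card * condAvg ν S g x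

theorem additiveComponent_eq_of_eqOn (g : (∀ i, α i) → ℝ) (i : ι) {x x' : ∀ i, α i}
    (h : ∀ j, j ≠ i → x j = x' j) : additiveComponent ν g i x = additiveComponent ν g i x' := by
  refine congrArg Neg.neg (sum_congr rfl fun S hS => ?_)
  rw [condAvg_eq_of_eqOn ν g fun j hj => h j ?_]
  rintro rfl
  exact (mem_filter.1 hS).2 hj

variable [∀ i, IsProbabilityMeasure (ν i)]

theorem measurePreserving_piecewise (S : Finset ι) :
    MeasurePreserving (fun q : (∀ i, α i) × (∀ i, α i) => S.piecewise q.1 q.2)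
      ((Measure.pi ν).prod (Measure.pi ν)) (Measure.pi ν) := by
  refine ⟨measurable_piecewise_prod S, (Measure.pi_eq fun s hs => ?_).symm⟩
  have hpre : (fun q : (∀ i, α i) × (∀ i, α i) => S.piecewise q.1 q.2) ⁻¹' Set.univ.pi s =
      Set.univ.pi (S.piecewise s fun _ => Set.univ) ×ˢ
        Set.univ.pi (S.piecewise (fun _ => Set.univ) s) := by
    ext q
    simp only [Set.mem_preimage, Set.mem_pi, Set.mem_univ, true_implies, Set.mem_prod,
      Finset.piecewise, ← forall_and]
    refine forall_congr' fun j => ?_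
    by_cases hj : j ∈ S <;> simp [hj]
  rw [Measure.map_apply (measurable_piecewise_prod S) (.univ_pi hs), hpre, Measure.prod_prod,
    Measure.pi_pi, Measure.pi_pi, ← prod_mul_distrib]
  refine prod_congr rfl fun j _ => ?_
  by_cases hj : j ∈ S <;> simp [hj]

theorem condAvg_univ (f : (∀ i, α i) → ℝ) : condAvg ν univ f = f := by
  ext x
  simp [condAvg]

variable {ν}

theorem measurable_condAvg {f : (∀ i, α i) → ℝ} (hf : Measurable f) (S : Finset ι) :
    Measurable (condAvg ν S f) :=
  (hf.comp (measurable_piecewise_prod S)).stronglyMeasurable.integral_prod_right'.measurable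

theorem integrable_comp_piecewise {f : (∀ i, α i) → ℝ} (hf : Integrable f (Measure.pi ν))
    (S : Finset ι) :
    Integrable (fun q : (∀ i, α i) × (∀ i, α i) => f (S.piecewise q.1 q.2))
      ((Measure.pi ν).prod (Measure.pi ν)) :=
  (measurePreserving_piecewise ν S).integrable_comp_of_integrable hf

theorem integral_comp_piecewise {f : (∀ i, α i) → ℝ}
    (hf : AEStronglyMeasurable f (Measure.pi ν)) (S : Finset ι) :
    ∫ q, f (S.piecewise q.1 q.2) ∂(Measure.pi ν).prod (Measure.pi ν) =
      ∫ x, f x ∂Measure.pi ν := by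
  rw [← (measurePreserving_piecewise ν S).map_eq] at hf
  conv_rhs => rw [← (measurePreserving_piecewise ν S).map_eq]
  exact (integral_map (measurable_piecewise_prod S).aemeasurable hf).symm

theorem integrable_condAvg {f : (∀ i, α i) → ℝ} (hf : Integrable f (Measure.pi ν))
    (S : Finset ι) : Integrable (condAvg ν S f) (Measure.pi ν) :=
  (integrable_comp_piecewise hf S).integral_prod_left

theorem memLp_two_condAvg {f : (∀ i, α i) → ℝ} (hf : MemLp f 2 (Measure.pi ν))
    (hfm : Measurable f) (S : Finset ι) : MemLp (condAvg ν S f) 2 (Measure.pi ν) := by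
  have hsq := integrable_comp_piecewise hf.integrable_sq S
  refine (memLp_two_iff_integrable_sq (measurable_condAvg hfm S).aestronglyMeasurable).2 <|
    hsq.integral_prod_left.mono' ((measurable_condAvg hfm S).pow_const 2).aestronglyMeasurable ?_
  filter_upwards [(integrable_comp_piecewise (hf.integrable one_le_two) S).prod_right_ae,
    hsq.prod_right_ae] with x hx hx2
  rw [Real.norm_eq_abs, abs_pow, sq_abs]
  exact even_two.convexOn_pow.map_integral_le (continuous_pow 2).continuousOn isClosed_univ
    (ae_of_all _ fun _ => trivial) hx hx2

theorem condAvg_sum {κ : Type*} (s : Finset κ) (c : κ → ℝ) {f : κ → (∀ i, α i) → ℝ}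
    (hf : ∀ k ∈ s, Integrable (f k) (Measure.pi ν)) (S : Finset ι) :
    condAvg ν S (fun x => ∑ k ∈ s, c k * f k x) =ᵐ[Measure.pi ν]
      fun x => ∑ k ∈ s, c k * condAvg ν S (f k) x := by
  filter_upwards [ae_all_iff.2 fun k : s =>
    (integrable_comp_piecewise (hf k k.2) S).prod_right_ae] with x hx
  simp only [condAvg, ← integral_const_mul]
  exact integral_finsetSum s fun k hk => (hx ⟨k, hk⟩).const_mul (c k)

theorem condAvg_condAvg {f : (∀ i, α i) → ℝ} (hf : Integrable f (Measure.pi ν))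
    (A B : Finset ι) :
    condAvg ν A (condAvg ν B f) =ᵐ[Measure.pi ν] condAvg ν (A ∩ B) f := by
  filter_upwards [(integrable_comp_piecewise hf (A ∩ B)).prod_right_ae] with x hx
  have hsplice (z y : ∀ i, α i) :
      B.piecewise (A.piecewise x z) y = (A ∩ B).piecewise x ((B \ A).piecewise z y) :=
    funext fun j => by by_cases hA : j ∈ A <;> by_cases hB : j ∈ B <;> simp [hA, hB]
  simp only [condAvg, hsplice]
  rw [integral_integral (integrable_comp_piecewise hx (B \ A))]
  exact integral_comp_piecewise (f := fun w => f ((A ∩ B).piecewise x w))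
    hx.aestronglyMeasurable _

theorem integral_condAvg_mul {S : Finset ι} {f k : (∀ i, α i) → ℝ}
    (hfk : Integrable (fun x => f x * k x) (Measure.pi ν))
    (hk : ∀ x y, k (S.piecewise x y) = k x) :
    ∫ x, condAvg ν S f x * k x ∂Measure.pi ν = ∫ x, f x * k x ∂Measure.pi ν := by
  rw [← integral_comp_piecewise hfk.aestronglyMeasurable S,
    integral_prod _ (integrable_comp_piecewise hfk S)]
  simp only [hk, condAvg, integral_mul_const]

theorem topInteraction_add_sum_additiveComponent (g : (∀ i, α i) → ℝ) (x : ∀ i, α i) :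
    topInteraction ν g x + ∑ i, additiveComponent ν g i x = g x := by
  rw [topInteraction, sum_eq_add_sum_sum_div_card_compl, condAvg_univ]
  simp [additiveComponent, div_mul_eq_mul_div]

variable {g : (∀ i, α i) → ℝ}

theorem measurable_topInteraction (hg : Measurable g) : Measurable (topInteraction ν g) :=
  measurable_sum _ fun S _ => (measurable_condAvg hg S).const_mul _

theorem memLp_two_topInteraction (hg2 : MemLp g 2 (Measure.pi ν)) (hg : Measurable g) :
    MemLp (topInteraction ν g) 2 (Measure.pi ν) :=
  memLp_finsetSum _ fun S _ => (memLp_two_condAvg hg2 hg S).const_mul _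

theorem measurable_additiveComponent (hg : Measurable g) (i : ι) :
    Measurable (additiveComponent ν g i) :=
  (measurable_sum _ fun S _ => (measurable_condAvg hg S).const_mul _).neg

theorem memLp_two_additiveComponent (hg2 : MemLp g 2 (Measure.pi ν)) (hg : Measurable g)
    (i : ι) : MemLp (additiveComponent ν g i) 2 (Measure.pi ν) :=
  (memLp_finsetSum _ fun S _ => (memLp_two_condAvg hg2 hg S).const_mul _).neg

theorem condAvg_erase_topInteraction_ae_eq_zero (hg : Integrable g (Measure.pi ν)) (i : ι) :
    condAvg ν (univ.erase i) (topInteraction ν g) =ᵐ[Measure.pi ν] 0 := by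
  filter_upwards [condAvg_sum univ (fun S => (-1) ^ Sᶜ.card)
      (fun S _ => integrable_condAvg hg S) (univ.erase i),
    ae_all_iff.2 fun S => condAvg_condAvg hg (univ.erase i) S] with x hsum hcomp
  unfold topInteraction
  rw [hsum]
  simp only [hcomp, erase_inter, univ_inter]
  exact sum_neg_one_pow_card_compl_mul_erase i fun S => condAvg ν S g x

theorem integral_topInteraction_mul_condAvg_of_ne_univ (hg2 : MemLp g 2 (Measure.pi ν))
    (hg : Measurable g) {S : Finset ι} (hS : S ≠ univ) :
    ∫ x, topInteraction ν g x * condAvg ν S g x ∂Measure.pi ν = 0 := by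
  obtain ⟨i, hi⟩ : ∃ i, i ∉ S := by
    by_contra! h
    exact hS (eq_univ_of_forall h)
  have hk (x y : ∀ i, α i) : condAvg ν S g ((univ.erase i).piecewise x y) = condAvg ν S g x :=
    condAvg_eq_of_eqOn ν g fun j hj =>
      piecewise_eq_of_mem _ _ _ (mem_erase.2 ⟨fun h => hi (h ▸ hj), mem_univ j⟩)
  rw [← integral_condAvg_mul ((memLp_two_topInteraction hg2 hg).integrable_mul
    (memLp_two_condAvg hg2 hg S)) hk]
  refine integral_eq_zero_of_ae ?_
  filter_upwards [condAvg_erase_topInteraction_ae_eq_zero (hg2.integrable one_le_two) i]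
    with x hx
  simp [hx]

theorem topInteraction_ae_eq_zero (hg2 : MemLp g 2 (Measure.pi ν)) (hg : Measurable g)
    (horth : ∫ x, topInteraction ν g x * g x ∂Measure.pi ν = 0) :
    topInteraction ν g =ᵐ[Measure.pi ν] 0 := by
  have hh2 := memLp_two_topInteraction hg2 hg
  have hsq : ∫ x, topInteraction ν g x * topInteraction ν g x ∂Measure.pi ν = 0 := by
    conv_lhs => enter [2, x, 2]; rw [topInteraction]
    simp_rw [mul_sum, mul_left_comm _ ((-1 : ℝ) ^ _)]
    rw [integral_finsetSum (f := fun S x => (-1) ^ Sᶜ.card *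
      (topInteraction ν g x * condAvg ν S g x)) _
      fun S _ => (hh2.integrable_mul (memLp_two_condAvg hg2 hg S)).const_mul _]
    refine sum_eq_zero fun S _ => ?_
    rw [integral_const_mul]
    rcases eq_or_ne S univ with rfl | hS
    · rw [condAvg_univ, horth, mul_zero]
    · rw [integral_topInteraction_mul_condAvg_of_ne_univ hg2 hg hS, mul_zero]
  filter_upwards [(integral_eq_zero_iff_of_nonneg (fun x => mul_self_nonneg _)
    (hh2.integrable_mul hh2)).1 hsq] with x hx
  exact mul_self_eq_zero.1 hx

theorem condExp_comp_ae_eq_zero_of_condAvg_ae_eq_zero {Ω : Type*} [MeasurableSpace Ω]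
    {μ : Measure Ω} [IsFiniteMeasure μ] {X : Ω → ∀ i, α i} (hX : Measurable X)
    (hlaw : μ.map X = Measure.pi ν) (P : ι → Prop) [DecidablePred P] {f : (∀ i, α i) → ℝ}
    (hf : Integrable f (Measure.pi ν)) (h0 : condAvg ν {i | P i} f =ᵐ[Measure.pi ν] 0) :
    μ[f ∘ X | MeasurableSpace.comap (fun ω (j : {j // P j}) => X ω j) inferInstance]
      =ᵐ[μ] 0 := by
  have hres : Measurable fun (x : ∀ i, α i) (j : {j // P j}) => x j :=
    measurable_pi_lambda _ fun j => measurable_pi_apply j.1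
  have hfX : Integrable (f ∘ X) μ := by
    rw [← hlaw] at hf
    exact (integrable_map_measure hf.aestronglyMeasurable hX.aemeasurable).1 hf
  refine (ae_eq_condExp_of_forall_setIntegral_eq (hres.comp hX).comap_le hfX
    (fun _ _ _ => integrableOn_zero) ?_ aestronglyMeasurable_zero).symm
  rintro _ ⟨B, hB, rfl⟩ -
  set T := (fun (x : ∀ i, α i) (j : {j // P j}) => x j) ⁻¹' B
  have hT : MeasurableSet T := hres hB
  have hk (x y : ∀ i, α i) :
      T.indicator (1 : (∀ i, α i) → ℝ) (({i | P i} : Finset ι).piecewise x y) =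
        T.indicator 1 x := by
    have hmem : ({i | P i} : Finset ι).piecewise x y ∈ T ↔ x ∈ T := by
      change (fun j : {j // P j} => _) ∈ B ↔ (fun j : {j // P j} => x j) ∈ B
      rw [funext fun j : {j // P j} => piecewise_eq_of_mem _ x y (by simpa using j.2)]
    by_cases hx : x ∈ T
    · rw [Set.indicator_of_mem hx, Set.indicator_of_mem (hmem.2 hx), Pi.one_apply, Pi.one_apply]
    · rw [Set.indicator_of_notMem hx, Set.indicator_of_notMem (mt hmem.1 hx)]
  have hfT : T.indicator f = fun x => f x * T.indicator 1 x := by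
    ext x
    by_cases hx : x ∈ T <;> simp [hx]
  rw [integral_zero, Set.preimage_comp, eq_comm]
  calc ∫ ω in X ⁻¹' T, f (X ω) ∂μ = ∫ x in T, f x ∂Measure.pi ν := by
        rw [← hlaw, setIntegral_map hT (hlaw ▸ hf.aestronglyMeasurable) hX.aemeasurable]
    _ = ∫ x, f x * T.indicator 1 x ∂Measure.pi ν := by rw [← integral_indicator hT, hfT]
    _ = ∫ x, condAvg ν {i | P i} f x * T.indicator 1 x ∂Measure.pi ν :=
        (integral_condAvg_mul (hfT ▸ hf.indicator hT) hk).symm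
    _ = 0 := integral_eq_zero_of_ae <| by filter_upwards [h0] with x hx; simp [hx]

theorem exists_measurable_comp_restrict_ne {κ β : Type*} [MeasurableSpace β] (b : β) (i : κ)
    {F : (κ → β) → ℝ} (hF : Measurable F)
    (hFi : ∀ x x', (∀ j, j ≠ i → x j = x' j) → F x = F x') :
    ∃ F' : ({j // j ≠ i} → β) → ℝ, Measurable F' ∧ ∀ x, F' (fun j => x j) = F x := by
  classical
  have hext : Measurable fun (u : {j // j ≠ i} → β) (j : κ) =>
      if h : j = i then b else u ⟨j, h⟩ :=
    measurable_pi_lambda _ fun j => by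
      by_cases h : j = i
      · simpa only [h, dite_true] using measurable_const
      · simpa only [h, dite_false] using measurable_pi_apply _
  exact ⟨_, hF.comp hext, fun x => hFi _ _ fun j hj => by simp [hj]⟩

end HoeffdingDecomposition

/-- Lemma: decomposition of a function orthogonal to all "centered"
interactions. Let `X₁, …, X_p` be jointly independent real random variables and `g` a
measurable function with `g(X)` square-integrable. If `E[h(X) g(X)] = 0` for every measurable
`h` with `h(X)` square-integrable satisfying `E[h(X) | σ(X_j, j ≠ i)] = 0` a.s. for all `i`,
then `g(X) = Σᵢ gᵢ(X₋ᵢ)` a.s. for some measurable functions `gᵢ` of the coordinates other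
than `i`, with each `gᵢ(X₋ᵢ)` square-integrable. -/
theorem additive_decomposition_of_orthogonality
    {Ω : Type*} [MeasurableSpace Ω] (μ : Measure Ω) [IsProbabilityMeasure μ]
    (p : ℕ) (X : Fin p → Ω → ℝ) (hXmeas : ∀ i, Measurable (X i))
    (hindep : iIndepFun X μ)
    (g : (Fin p → ℝ) → ℝ) (hg : Measurable g)
    (hg2 : MemLp (fun ω => g fun i => X i ω) 2 μ)
    (horth : ∀ h : (Fin p → ℝ) → ℝ, Measurable h →
      MemLp (fun ω => h fun i => X i ω) 2 μ →
      (∀ i : Fin p,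
        (μ[(fun ω => h fun i => X i ω) |
            MeasurableSpace.comap (fun ω => fun j : {j : Fin p // j ≠ i} => X j.1 ω)
              inferInstance]) =ᵐ[μ] 0) →
      ∫ ω, h (fun i => X i ω) * g (fun i => X i ω) ∂μ = 0) :
    ∃ gi : (i : Fin p) → ({j : Fin p // j ≠ i} → ℝ) → ℝ,
      (∀ i, Measurable (gi i)) ∧
      (∀ i, MemLp (fun ω => gi i fun j => X j.1 ω) 2 μ) ∧
      (fun ω => g fun i => X i ω) =ᵐ[μ]
        fun ω => ∑ i : Fin p, gi i fun j => X j.1 ω := by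
  set Xv : Ω → Fin p → ℝ := fun ω i => X i ω
  have hXv : Measurable Xv := measurable_pi_lambda _ hXmeas
  set ν := fun i => μ.map (X i)
  have (i : Fin p) : IsProbabilityMeasure (ν i) :=
    Measure.isProbabilityMeasure_map (hXmeas i).aemeasurable
  have hlaw : μ.map Xv = Measure.pi ν :=
    (iIndepFun_iff_map_fun_eq_pi_map fun i => (hXmeas i).aemeasurable).1 hindep
  have memLp_comp {F : (Fin p → ℝ) → ℝ} (hF : Measurable F) :
      MemLp (F ∘ Xv) 2 μ ↔ MemLp F 2 (Measure.pi ν) := by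
    rw [← hlaw, memLp_map_measure_iff hF.aestronglyMeasurable hXv.aemeasurable]
  have hgπ : MemLp g 2 (Measure.pi ν) := (memLp_comp hg).1 hg2
  have hhm := measurable_topInteraction (ν := ν) hg
  have hh2 := memLp_two_topInteraction hgπ hg
  have horthπ : ∫ x, topInteraction ν g x * g x ∂Measure.pi ν = 0 := by
    rw [← hlaw, integral_map (f := fun x => topInteraction ν g x * g x) hXv.aemeasurable
      (hhm.mul hg).aestronglyMeasurable]
    refine horth _ hhm ((memLp_comp hhm).2 hh2) fun i => ?_
    refine condExp_comp_ae_eq_zero_of_condAvg_ae_eq_zero hXv hlaw (· ≠ i)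
      (hh2.integrable one_le_two) ?_
    rw [filter_ne']
    exact condAvg_erase_topInteraction_ae_eq_zero (hgπ.integrable one_le_two) i
  have hdecomp : g =ᵐ[μ.map Xv] fun x => ∑ i, additiveComponent ν g i x := by
    filter_upwards [hlaw ▸ topInteraction_ae_eq_zero hgπ hg horthπ] with x hx
    rw [← topInteraction_add_sum_additiveComponent (ν := ν) g x, hx, Pi.zero_apply, zero_add]
  choose gi hgi_meas hgi_eq using fun i => exists_measurable_comp_restrict_ne 0 i
    (measurable_additiveComponent (ν := ν) hg i) fun x x' => additiveComponent_eq_of_eqOn ν g i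
  refine ⟨gi, hgi_meas, fun i => ?_, ?_⟩
  · rw [show (fun ω => gi i fun j => X j.1 ω) = additiveComponent ν g i ∘ Xv from
      funext fun ω => hgi_eq i (Xv ω)]
    exact (memLp_comp (measurable_additiveComponent hg i)).2 (memLp_two_additiveComponent hgπ hg i)
  · filter_upwards [ae_eq_comp hXv.aemeasurable hdecomp] with ω hω
    exact hω.trans (sum_congr rfl fun i _ => (hgi_eq i (Xv ω)).symm)
end

section
/- Let (Ω, ℱ, P) be a probability space, let X₁, …, X_p : Ω → ℝ be jointly independent random variables, let g : ℝ^p → ℝ be measurable with Y := g(X₁,…,X_p) square-integrable, and define h := Σ_{I ⊆ {1,…,p}} (−1)^{p−|I|} E[Y | σ(X_j, j ∈ I)] (where for I = ∅ the conditional expectation is the constant E[Y]). Then for every i ∈ {1,…,p}, E[h | σ(X_j, j ≠ i)] = 0 almost surely. -/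
/-!
If the coordinates are independent, conditioning first on `σ(X_j, j ∈ S)` and then on
`σ(X_j, j ∈ T)` amounts to conditioning on `σ(X_j, j ∈ S ∩ T)`: the coordinates in `T \ S` are
independent of everything `σ(X_j, j ∈ S)`-measurable, so they can be dropped from the second
conditioning, and the tower property does the rest. Conditioning the term of index `I` on
`σ(X_j, j ≠ i)` therefore gives `E[Y | σ(X_j, j ∈ I \ {i})]`, and the terms of index `I` and
`I ∪ {i}` cancel because their signs are opposite.
-/

open MeasureTheory ProbabilityTheory Set

section SetIntegral

variable {α E : Type*} [NormedAddCommGroup E] [NormedSpace ℝ E] {m m₀ : MeasurableSpace α}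
  {μ : Measure α}

theorem MeasurableSpace.isPiSystem_image2_inter (m₁ m₂ : MeasurableSpace α) :
    IsPiSystem (image2 (· ∩ ·) {s | MeasurableSet[m₁] s} {t | MeasurableSet[m₂] t}) := by
  rintro _ ⟨s₁, hs₁, t₁, ht₁, rfl⟩ _ ⟨s₂, hs₂, t₂, ht₂, rfl⟩ -
  exact ⟨s₁ ∩ s₂, hs₁.inter hs₂, t₁ ∩ t₂, ht₁.inter ht₂, inter_inter_inter_comm s₁ s₂ t₁ t₂⟩

theorem MeasurableSpace.generateFrom_image2_inter (m₁ m₂ : MeasurableSpace α) :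
    generateFrom (image2 (· ∩ ·) {s | MeasurableSet[m₁] s} {t | MeasurableSet[m₂] t}) =
      m₁ ⊔ m₂ := by
  refine le_antisymm (generateFrom_le ?_) (sup_le (fun s hs => ?_) (fun t ht => ?_))
  · rintro _ ⟨s, hs, t, ht, rfl⟩
    exact (le_sup_left (b := m₂) s hs).inter (le_sup_right (a := m₁) t ht)
  · exact measurableSet_generateFrom ⟨s, hs, univ, .univ, inter_univ s⟩
  · exact measurableSet_generateFrom ⟨univ, .univ, t, ht, univ_inter t⟩

theorem setIntegral_eq_setIntegral_of_isPiSystem {C : Set (Set α)} (hm : m ≤ m₀)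
    (h_eq : m = MeasurableSpace.generateFrom C) (h_inter : IsPiSystem C) {f g : α → E}
    (hf : Integrable f μ) (hg : Integrable g μ) (h_univ : ∫ x, f x ∂μ = ∫ x, g x ∂μ)
    (basic : ∀ t ∈ C, ∫ x in t, f x ∂μ = ∫ x in t, g x ∂μ) {t : Set α}
    (ht : MeasurableSet[m] t) : ∫ x in t, f x ∂μ = ∫ x in t, g x ∂μ := by
  induction t, ht using MeasurableSpace.induction_on_inter h_eq h_inter with
  | empty => simp
  | basic t ht => exact basic t ht
  | compl t ht iht =>
    rw [← integral_add_compl (hm t ht) hf, ← integral_add_compl (hm t ht) hg, iht] at h_univ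
    exact add_left_cancel h_univ
  | iUnion s hs_disj hs ihs =>
    rw [integral_iUnion (fun n => hm _ (hs n)) hs_disj hf.integrableOn,
      integral_iUnion (fun n => hm _ (hs n)) hs_disj hg.integrableOn]
    exact tsum_congr ihs

end SetIntegral

section Independence

variable {Ω E : Type*} [NormedAddCommGroup E] [NormedSpace ℝ E] [CompleteSpace E]
  {𝓕 𝓖 𝓗 m₀ : MeasurableSpace Ω} {μ : Measure Ω} [IsFiniteMeasure μ] {f : Ω → E}

theorem setIntegral_inter_eq_of_indep (h𝓕 : 𝓕 ≤ m₀) (h𝓗 : 𝓗 ≤ m₀) (hindep : Indep 𝓕 𝓗 μ)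
    (hf : StronglyMeasurable[𝓕] f) (hf_int : Integrable f μ) {A C : Set Ω}
    (hA : MeasurableSet[𝓕] A) (hC : MeasurableSet[𝓗] C) :
    ∫ x in A ∩ C, f x ∂μ = μ.real C • ∫ x in A, f x ∂μ := by
  have h_const : μ[A.indicator f | 𝓗] =ᵐ[μ] fun _ => μ[A.indicator f] :=
    condExp_indep_eq h𝓕 h𝓗 (hf.indicator hA) hindep
  calc ∫ x in A ∩ C, f x ∂μ = ∫ x in C, A.indicator f x ∂μ := by
        rw [setIntegral_indicator (h𝓕 A hA), inter_comm]
    _ = ∫ x in C, (μ[A.indicator f | 𝓗]) x ∂μ :=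
        (setIntegral_condExp h𝓗 (hf_int.indicator (h𝓕 A hA)) hC).symm
    _ = μ.real C • ∫ x in A, f x ∂μ := by
        rw [setIntegral_congr_ae (h𝓗 C hC) (h_const.mono fun x hx _ => hx), setIntegral_const,
          integral_indicator (h𝓕 A hA)]

theorem condExp_sup_eq_of_indep (h𝓖𝓕 : 𝓖 ≤ 𝓕) (h𝓕 : 𝓕 ≤ m₀) (h𝓗 : 𝓗 ≤ m₀)
    (hindep : Indep 𝓕 𝓗 μ) (hf : StronglyMeasurable[𝓕] f) :
    μ[f | 𝓖 ⊔ 𝓗] =ᵐ[μ] μ[f | 𝓖] := by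
  by_cases hf_int : Integrable f μ
  swap
  · simp_rw [condExp_of_not_integrable hf_int]
    rfl
  have h𝓖 : 𝓖 ≤ m₀ := h𝓖𝓕.trans h𝓕
  refine (ae_eq_condExp_of_forall_setIntegral_eq (sup_le h𝓖 h𝓗) hf_int
    (fun s _ _ => integrable_condExp.integrableOn) (fun s hs _ => ?_)
    (stronglyMeasurable_condExp.mono (le_sup_left : 𝓖 ≤ 𝓖 ⊔ 𝓗)).aestronglyMeasurable).symm
  refine setIntegral_eq_setIntegral_of_isPiSystem (sup_le h𝓖 h𝓗)
    (MeasurableSpace.generateFrom_image2_inter 𝓖 𝓗).symm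
    (MeasurableSpace.isPiSystem_image2_inter 𝓖 𝓗) integrable_condExp hf_int
    (integral_condExp h𝓖) ?_ hs
  rintro _ ⟨A, hA, C, hC, rfl⟩
  rw [setIntegral_inter_eq_of_indep h𝓕 h𝓗 hindep (stronglyMeasurable_condExp.mono h𝓖𝓕)
      integrable_condExp (h𝓖𝓕 A hA) hC,
    setIntegral_inter_eq_of_indep h𝓕 h𝓗 hindep hf hf_int (h𝓖𝓕 A hA) hC,
    setIntegral_condExp h𝓖 hf_int hA]

end Independence

theorem MeasurableSpace.comap_subtype_pi_eq_iSup {Ω ι : Type*} {β : ι → Type*}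
    [mβ : ∀ i, MeasurableSpace (β i)] (X : ∀ i, Ω → β i) (P : ι → Prop) :
    MeasurableSpace.comap (fun ω (j : {j // P j}) => X j ω) inferInstance =
      ⨆ (j) (_ : P j), (mβ j).comap (X j) := by
  simp only [MeasurableSpace.pi, MeasurableSpace.comap_iSup, MeasurableSpace.comap_comp]
  exact iSup_subtype (f := fun j : {j // P j} => (mβ j).comap (X j))

section Coordinates

variable {Ω ι E : Type*} [NormedAddCommGroup E] [NormedSpace ℝ E] [CompleteSpace E]
  {β : ι → Type*} [mβ : ∀ i, MeasurableSpace (β i)] {m₀ : MeasurableSpace Ω} {μ : Measure Ω}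
  [IsProbabilityMeasure μ] {X : ∀ i, Ω → β i}

theorem condExp_condExp_iSup_comap (hX : ∀ i, Measurable (X i)) (hindep : iIndepFun X μ)
    (S T : Set ι) (Y : Ω → E) :
    μ[μ[Y | ⨆ j ∈ S, (mβ j).comap (X j)] | ⨆ j ∈ T, (mβ j).comap (X j)] =ᵐ[μ]
      μ[Y | ⨆ j ∈ S ∩ T, (mβ j).comap (X j)] := by
  have hle (U : Set ι) : ⨆ j ∈ U, (mβ j).comap (X j) ≤ m₀ :=
    iSup₂_le fun j _ => (hX j).comap_le
  have hST : ⨆ j ∈ S ∩ T, (mβ j).comap (X j) ≤ ⨆ j ∈ S, (mβ j).comap (X j) :=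
    biSup_mono fun _ hj => hj.1
  have hT : ⨆ j ∈ T, (mβ j).comap (X j) =
      (⨆ j ∈ S ∩ T, (mβ j).comap (X j)) ⊔ ⨆ j ∈ T \ S, (mβ j).comap (X j) := by
    rw [← iSup_union, inter_comm, inter_union_sdiff]
  rw [hT]
  calc _ =ᵐ[μ] μ[μ[Y | ⨆ j ∈ S, (mβ j).comap (X j)] | ⨆ j ∈ S ∩ T, (mβ j).comap (X j)] :=
        condExp_sup_eq_of_indep hST (hle S) (hle _)
          (indep_iSup_of_disjoint (fun j => (hX j).comap_le) hindep.iIndep disjoint_sdiff_right)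
          stronglyMeasurable_condExp
    _ =ᵐ[μ] μ[Y | ⨆ j ∈ S ∩ T, (mβ j).comap (X j)] := condExp_condExp_of_le hST (hle S)

end Coordinates

open Finset in
theorem Finset.sum_neg_one_pow_card_sub_mul_erase_eq_zero {ι R : Type*} [Fintype ι]
    [DecidableEq ι] [CommRing R] (i : ι) (T : Finset ι → R) :
    ∑ I : Finset ι, (-1 : R) ^ (Fintype.card ι - #I) * T (I.erase i) = 0 := by
  rw [← powerset_univ, ← insert_erase (mem_univ i), sum_powerset_insert (notMem_erase i _),
    ← sum_add_distrib]
  refine sum_eq_zero fun I hI => ?_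
  have hiI : i ∉ I := fun h => notMem_erase i univ (mem_powerset.1 hI h)
  have hcard : #I + 1 ≤ Fintype.card ι := card_insert_of_notMem hiI ▸ card_le_univ _
  rw [erase_insert hiI, erase_eq_of_notMem hiI, card_insert_of_notMem hiI,
    show Fintype.card ι - #I = Fintype.card ι - (#I + 1) + 1 by omega, pow_succ]
  ring

theorem condexp_inclusion_exclusion_eq_zero_general
    {Ω : Type*} [MeasurableSpace Ω] (μ : Measure Ω) [IsProbabilityMeasure μ]
    (p : ℕ) (X : Fin p → Ω → ℝ) (hXmeas : ∀ i, Measurable (X i))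
    (hindep : iIndepFun X μ)
    (g : (Fin p → ℝ) → ℝ) :
    ∀ i : Fin p,
      (μ[(fun ω => ∑ I : Finset (Fin p), (-1 : ℝ) ^ (p - I.card) *
            condExp
              (MeasurableSpace.comap (fun ω' => fun j : {j : Fin p // j ∈ I} => X j.1 ω')
                inferInstance)
              μ (fun ω' => g fun i => X i ω') ω) |
          MeasurableSpace.comap (fun ω => fun j : {j : Fin p // j ≠ i} => X j.1 ω)
            inferInstance]) =ᵐ[μ] 0 := by
  intro i
  set Y : Ω → ℝ := fun ω => g fun k => X k ω
  simp only [MeasurableSpace.comap_subtype_pi_eq_iSup (β := fun _ => ℝ)]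
  set σ : Finset (Fin p) → MeasurableSpace Ω := fun I => ⨆ j ∈ I, .comap (X j) inferInstance
  have h_term (I : Finset (Fin p)) :
      μ[(-1 : ℝ) ^ (p - I.card) • μ[Y | σ I] | ⨆ (j) (_ : j ≠ i), .comap (X j) inferInstance]
        =ᵐ[μ] (-1 : ℝ) ^ (p - I.card) • μ[Y | σ (I.erase i)] := by
    have h := condExp_condExp_iSup_comap hXmeas hindep (↑I) {i}ᶜ Y
    rw [← Set.sdiff_eq, ← Finset.coe_erase] at h
    exact (condExp_smul _ _ _).trans (h.const_smul _)
  have h_smul : (fun ω => ∑ I, (-1 : ℝ) ^ (p - I.card) * μ[Y | σ I] ω) =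
      ∑ I, (-1 : ℝ) ^ (p - I.card) • μ[Y | σ I] := by
    ext ω
    simp [Finset.sum_apply]
  rw [h_smul]
  filter_upwards [condExp_finsetSum (f := fun I => (-1 : ℝ) ^ (p - I.card) • μ[Y | σ I])
      (fun I _ => integrable_condExp.smul _) _, ae_all_iff.2 h_term] with ω hω_sum hω_term
  rw [hω_sum, Finset.sum_apply]
  simpa [hω_term] using Finset.sum_neg_one_pow_card_sub_mul_erase_eq_zero i fun K => μ[Y | σ K] ω

/-- For jointly independent random variables `X₁, …, X_p` and a
square-integrable `Y = g(X)`, the inclusion–exclusion combination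
`h := Σ_{I ⊆ [p]} (−1)^{p−|I|} E[Y | σ(X_j, j ∈ I)]` satisfies
`E[h | σ(X_j, j ≠ i)] = 0` almost surely for every `i`. (For `I = ∅` the σ-algebra
`σ(X_j, j ∈ ∅)` is trivial, so the conditional expectation is the constant `E[Y]`.) -/
theorem condexp_inclusion_exclusion_eq_zero
    {Ω : Type*} [MeasurableSpace Ω] (μ : Measure Ω) [IsProbabilityMeasure μ]
    (p : ℕ) (X : Fin p → Ω → ℝ) (hXmeas : ∀ i, Measurable (X i))
    (hindep : iIndepFun X μ)
    (g : (Fin p → ℝ) → ℝ) (hg : Measurable g)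
    (hY2 : MemLp (fun ω => g fun i => X i ω) 2 μ) :
    ∀ i : Fin p,
      (μ[(fun ω => ∑ I : Finset (Fin p), (-1 : ℝ) ^ (p - I.card) *
            condExp
              (MeasurableSpace.comap (fun ω' => fun j : {j : Fin p // j ∈ I} => X j.1 ω')
                inferInstance)
              μ (fun ω' => g fun i => X i ω') ω) |
          MeasurableSpace.comap (fun ω => fun j : {j : Fin p // j ≠ i} => X j.1 ω)
            inferInstance]) =ᵐ[μ] 0 :=
  condexp_inclusion_exclusion_eq_zero_general μ p X hXmeas hindep g
end

section
/- Let (Ω, ℱ, P) be a probability space and let X₁, …, X_p : Ω → ℝ be jointly independent random variables. Let g : ℝ^p → ℝ be measurable with Y := g(X₁,…,X_p) integrable. For any I ⊆ {1,…,p} and any i ∈ I, one has E[ E[Y | σ(X_j, j ∈ I)] | σ(X_j, j ≠ i) ] = E[Y | σ(X_j, j ∈ I \ {i})] almost surely. -/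
/-!
The σ-algebra `σ(X_j, j ≠ i)` is the join of `σ(X_j, j ∈ I ∖ {i})` and of
`σ(X_j, j ∉ I, j ≠ i)`, and the latter is independent of `σ(X_j, j ∈ I)`, with respect to which
`E[Y | σ(X_j, j ∈ I)]` is measurable. Adjoining a σ-algebra independent of everything the integrand
and the conditioning σ-algebra depend on does not change a conditional expectation, so the left-hand
side is `E[E[Y | σ(X_j, j ∈ I)] | σ(X_j, j ∈ I ∖ {i})]`, and the tower property concludes.
-/

open MeasureTheory ProbabilityTheory Set

namespace MeasurableSpace

variable {Ω : Type*}

theorem isPiSystem_image2_inter_s10 (m₁ m₂ : MeasurableSpace Ω) :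
    IsPiSystem (image2 (· ∩ ·) {s | MeasurableSet[m₁] s} {t | MeasurableSet[m₂] t}) := by
  rintro _ ⟨a, ha, b, hb, rfl⟩ _ ⟨a', ha', b', hb', rfl⟩ -
  exact ⟨a ∩ a', ha.inter ha', b ∩ b', hb.inter hb', (inter_inter_inter_comm a b a' b').symm⟩

theorem sup_eq_generateFrom_image2_inter (m₁ m₂ : MeasurableSpace Ω) :
    m₁ ⊔ m₂ = generateFrom (image2 (· ∩ ·) {s | MeasurableSet[m₁] s} {t | MeasurableSet[m₂] t}) := by
  refine le_antisymm (sup_le (fun a ha => ?_) (fun b hb => ?_)) (generateFrom_le ?_)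
  · exact measurableSet_generateFrom ⟨a, ha, univ, .univ, inter_univ a⟩
  · exact measurableSet_generateFrom ⟨univ, .univ, b, hb, univ_inter b⟩
  · rintro _ ⟨a, ha, b, hb, rfl⟩
    exact (le_sup_left (b := m₂) a ha).inter (le_sup_right (a := m₁) b hb)

theorem comap_process_subtype_pi {ι β : Type*} [MeasurableSpace β] (X : ι → Ω → β)
    (P : ι → Prop) :
    MeasurableSpace.comap (fun ω (j : {j // P j}) => X j ω) inferInstance =
      ⨆ j ∈ {j | P j}, MeasurableSpace.comap (X j) inferInstance :=
  (comap_process_pi fun j : {j // P j} => X j).trans iSup_subtype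

end MeasurableSpace

namespace MeasureTheory

variable {Ω E : Type*} [NormedAddCommGroup E] [NormedSpace ℝ E]
  {m₁ m₂ m' m₀ : MeasurableSpace Ω} {μ : Measure Ω}

theorem setIntegral_eq_of_isPiSystem (hm : m₁ ≤ m₀) {S : Set (Set Ω)}
    (h_eq : m₁ = MeasurableSpace.generateFrom S) (h_inter : IsPiSystem S) {f g : Ω → E}
    (hf : Integrable f μ) (hg : Integrable g μ) (h_univ : ∫ x, f x ∂μ = ∫ x, g x ∂μ)
    (h_basic : ∀ t ∈ S, ∫ x in t, f x ∂μ = ∫ x in t, g x ∂μ) {t : Set Ω}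
    (ht : MeasurableSet[m₁] t) : ∫ x in t, f x ∂μ = ∫ x in t, g x ∂μ := by
  induction t, ht using MeasurableSpace.induction_on_inter h_eq h_inter with
  | empty => simp
  | basic t ht => exact h_basic t ht
  | compl t ht h => rw [setIntegral_compl (hm t ht) hf, setIntegral_compl (hm t ht) hg, h_univ, h]
  | iUnion s hd hs h =>
    rw [integral_iUnion (fun i => hm _ (hs i)) hd hf.integrableOn,
      integral_iUnion (fun i => hm _ (hs i)) hd hg.integrableOn, tsum_congr h]

variable [CompleteSpace E] [IsFiniteMeasure μ]

theorem setIntegral_inter_eq_measureReal_smul_of_indep (hm' : m' ≤ m₀) (hm₂ : m₂ ≤ m₀)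
    (hindep : Indep m' m₂ μ) {f : Ω → E} (hf : StronglyMeasurable[m'] f) (hfi : Integrable f μ)
    {s t : Set Ω} (hs : MeasurableSet[m'] s) (ht : MeasurableSet[m₂] t) :
    ∫ x in s ∩ t, f x ∂μ = μ.real t • ∫ x in s, f x ∂μ := by
  calc ∫ x in s ∩ t, f x ∂μ = ∫ x in t, s.indicator f x ∂μ := by
        rw [setIntegral_indicator (hm' s hs), inter_comm]
  _ = ∫ x in t, μ[s.indicator f | m₂] x ∂μ :=
        (setIntegral_condExp hm₂ (hfi.indicator (hm' s hs)) ht).symm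
  _ = ∫ x in t, (∫ y, s.indicator f y ∂μ) ∂μ := by
        refine setIntegral_congr_ae (hm₂ t ht) ?_
        filter_upwards [condExp_indep_eq hm' hm₂ (hf.indicator hs) hindep] with x hx _ using hx
  _ = μ.real t • ∫ x in s, f x ∂μ := by rw [setIntegral_const, integral_indicator (hm' s hs)]

/-- Both sides have the same integral over `a ∩ b` for `a ∈ m₁`, `b ∈ m₂`, namely `μ b` times the
integral over `a`; such sets form a π-system generating `m₁ ⊔ m₂`. -/
theorem condExp_sup_indep_eq (hm₁ : m₁ ≤ m') (hm' : m' ≤ m₀) (hm₂ : m₂ ≤ m₀)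
    (hindep : Indep m' m₂ μ) {f : Ω → E} (hf : StronglyMeasurable[m'] f) :
    μ[f | m₁ ⊔ m₂] =ᵐ[μ] μ[f | m₁] := by
  by_cases hfi : Integrable f μ
  swap; · simp_rw [condExp_of_not_integrable hfi]; rfl
  have hm₁₀ : m₁ ≤ m₀ := hm₁.trans hm'
  have hsup : m₁ ⊔ m₂ ≤ m₀ := sup_le hm₁₀ hm₂
  have hsm : StronglyMeasurable[m₁ ⊔ m₂] (μ[f | m₁]) := stronglyMeasurable_condExp.mono le_sup_left
  refine (ae_eq_condExp_of_forall_setIntegral_eq hsup hfi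
    (fun _ _ _ => integrable_condExp.integrableOn) (fun s hs _ => ?_)
    hsm.aestronglyMeasurable).symm
  refine setIntegral_eq_of_isPiSystem hsup (MeasurableSpace.sup_eq_generateFrom_image2_inter m₁ m₂)
    (MeasurableSpace.isPiSystem_image2_inter_s10 m₁ m₂) integrable_condExp hfi (integral_condExp hm₁₀)
    ?_ hs
  rintro _ ⟨a, ha, b, hb, rfl⟩
  rw [setIntegral_inter_eq_measureReal_smul_of_indep hm' hm₂ hindep
      (stronglyMeasurable_condExp.mono hm₁) integrable_condExp (hm₁ a ha) hb,
    setIntegral_inter_eq_measureReal_smul_of_indep hm' hm₂ hindep hf hfi (hm₁ a ha) hb,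
    setIntegral_condExp hm₁₀ hfi ha]

end MeasureTheory

theorem condexp_condexp_indep_general
    {Ω : Type*} [MeasurableSpace Ω] (μ : Measure Ω) [IsProbabilityMeasure μ]
    (p : ℕ) (X : Fin p → Ω → ℝ) (hXmeas : ∀ i, Measurable (X i))
    (hindep : iIndepFun X μ)
    (g : (Fin p → ℝ) → ℝ)
    (I : Finset (Fin p)) (i : Fin p) :
    (μ[(μ[(fun ω => g fun i => X i ω) |
          MeasurableSpace.comap (fun ω => fun j : {j : Fin p // j ∈ I} => X j.1 ω)
            inferInstance]) |
        MeasurableSpace.comap (fun ω => fun j : {j : Fin p // j ≠ i} => X j.1 ω)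
          inferInstance]) =ᵐ[μ]
      (μ[(fun ω => g fun i => X i ω) |
        MeasurableSpace.comap (fun ω => fun j : {j : Fin p // j ∈ I.erase i} => X j.1 ω)
          inferInstance]) := by
  simp only [MeasurableSpace.comap_process_subtype_pi]
  have hle : ∀ j, MeasurableSpace.comap (X j) inferInstance ≤ ‹MeasurableSpace Ω› :=
    fun j => (hXmeas j).comap_le
  have hle_iSup : ∀ J : Set (Fin p), ⨆ j ∈ J, MeasurableSpace.comap (X j) inferInstance ≤ ‹_› :=
    fun _ => iSup₂_le fun j _ => hle j
  have hsplit : {j | j ≠ i} = {j | j ∈ I.erase i} ∪ ({j | j ≠ i} \ {j | j ∈ I}) := by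
    ext j
    simp only [Finset.mem_erase, mem_union, mem_sdiff, mem_ofPred_eq]
    tauto
  have hsub : ⨆ j ∈ {j | j ∈ I.erase i}, MeasurableSpace.comap (X j) inferInstance ≤
      ⨆ j ∈ {j | j ∈ I}, MeasurableSpace.comap (X j) inferInstance :=
    biSup_mono fun j hj => Finset.mem_of_mem_erase hj
  have hindep_rest := indep_iSup_of_disjoint hle hindep.iIndep
    (disjoint_sdiff_right (s := {j | j ∈ I}) (t := {j | j ≠ i}))
  rw [hsplit, iSup_union]
  exact (condExp_sup_indep_eq hsub (hle_iSup _) (hle_iSup _) hindep_rest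
    stronglyMeasurable_condExp).trans (condExp_condExp_of_le hsub (hle_iSup _))

/-- tower-type property under independence.
For jointly independent random variables `X₁, …, X_p`, an integrable `Y = g(X)`, a set
`I ⊆ {1,…,p}` and `i ∈ I`, one has
`E[ E[Y | σ(X_j, j ∈ I)] | σ(X_j, j ≠ i) ] = E[Y | σ(X_j, j ∈ I \ {i})]` almost surely. -/
theorem condexp_condexp_indep
    {Ω : Type*} [MeasurableSpace Ω] (μ : Measure Ω) [IsProbabilityMeasure μ]
    (p : ℕ) (X : Fin p → Ω → ℝ) (hXmeas : ∀ i, Measurable (X i))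
    (hindep : iIndepFun X μ)
    (g : (Fin p → ℝ) → ℝ) (hg : Measurable g)
    (hYint : Integrable (fun ω => g fun i => X i ω) μ)
    (I : Finset (Fin p)) (i : Fin p) (hi : i ∈ I) :
    (μ[(μ[(fun ω => g fun i => X i ω) |
          MeasurableSpace.comap (fun ω => fun j : {j : Fin p // j ∈ I} => X j.1 ω)
            inferInstance]) |
        MeasurableSpace.comap (fun ω => fun j : {j : Fin p // j ≠ i} => X j.1 ω)
          inferInstance]) =ᵐ[μ]
      (μ[(fun ω => g fun i => X i ω) |
        MeasurableSpace.comap (fun ω => fun j : {j : Fin p // j ∈ I.erase i} => X j.1 ω)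
          inferInstance]) :=
  condexp_condexp_indep_general μ p X hXmeas hindep g I i
end
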